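/- Let G = ([n], E) be a DAG and let x ≠ y be vertices and K ⊆ [n] ∖ {x,y} a set such that K does not d-separate x from y in G. Then there exists a path p from x to y in G such that: (i) no non-collider on p belongs to K; (ii) for every collider n_t on p there exists a directed path q_t from n_t to some vertex k_t ∈ K (possibly of length zero, with n_t = k_t ∈ K); (iii) each q_t intersects p only at the vertex n_t; and (iv) the paths q_t are pairwise vertex-disjoint. -/

import Mathlib

open Matrix MvPolynomial

namespace CI

/-- A directed acyclic graph on vertex set `Fin n`. -/
structure DAG (n : ℕ) where
  E : Finset (Fin n × Fin n)
  acyclic : ∀ v : Fin n, ¬ Relation.TransGen (fun a b => (a, b) ∈ E) v v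

variable {n : ℕ}

/-- `d` is a descendant of `v` (every vertex is a descendant of itself). -/
def DAG.desc (G : DAG n) (v d : Fin n) : Prop :=
  Relation.ReflTransGen (fun a b => (a, b) ∈ G.E) v d

/-- An (undirected) path in a DAG from `i` to `j`, encoded by its length and a
vertex function which is constant past the end of the path. -/
structure GPath (G : DAG n) (i j : Fin n) where
  len : ℕ
  v : ℕ → Fin n
  start_eq : v 0 = i
  end_eq : v len = j
  inj : ∀ s t : ℕ, s ≤ len → t ≤ len → v s = v t → s = t
  adj : ∀ t : ℕ, t < len → (v t, v (t + 1)) ∈ G.E ∨ (v (t + 1), v t) ∈ G.E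
  stable : ∀ t : ℕ, len ≤ t → v t = v len

namespace GPath

variable {G : DAG n} {i j : Fin n}

/-- The interior vertex at position `t` is a collider on the path. -/
def IsCollider (p : GPath G i j) (t : ℕ) : Prop :=
  0 < t ∧ t < p.len ∧ (p.v (t - 1), p.v t) ∈ G.E ∧ (p.v (t + 1), p.v t) ∈ G.E

/-- `x` lies on the path `p`. -/
def onPath (p : GPath G i j) (x : Fin n) : Prop := ∃ t ≤ p.len, p.v t = x

/-- The path `p` is d-connecting given `K`. -/
def DConn (p : GPath G i j) (K : Finset (Fin n)) : Prop :=
  (∀ t : ℕ, 0 < t → t < p.len → ¬ p.IsCollider t → p.v t ∉ K) ∧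
  (∀ t : ℕ, p.IsCollider t → ∃ d ∈ K, G.desc (p.v t) d)

end GPath

/-- `K` d-separates `i` and `j` in `G`. -/
def DAG.dSep (G : DAG n) (i j : Fin n) (K : Finset (Fin n)) : Prop :=
  ∀ p : GPath G i j, ¬ p.DConn K

/-- `C` d-separates the sets `A` and `B` in `G`. -/
def DAG.dSepSets (G : DAG n) (A B C : Finset (Fin n)) : Prop :=
  ∀ a ∈ A, ∀ b ∈ B, ∀ p : GPath G a b, ¬ p.DConn C

/-- The parameterization `φ_G(Λ, Ω) = (I - Λ)^{-T} Ω (I - Λ)^{-1}`. -/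
noncomputable def phi (Λ : Matrix (Fin n) (Fin n) ℝ) (ω : Fin n → ℝ) :
    Matrix (Fin n) (Fin n) ℝ :=
  ((1 - Λ)⁻¹)ᵀ * Matrix.diagonal ω * (1 - Λ)⁻¹

/-- `(Λ, ω)` is a valid parameter for the DAG `G`. -/
def IsParam (G : DAG n) (Λ : Matrix (Fin n) (Fin n) ℝ) (ω : Fin n → ℝ) : Prop :=
  (∀ a b : Fin n, (a, b) ∉ G.E → Λ a b = 0) ∧ ∀ a : Fin n, 0 < ω a

/-- The Gaussian DAG model `M_G`: the image of `φ_G` over the parameter space. -/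
def gaussianModel (G : DAG n) : Set (Matrix (Fin n) (Fin n) ℝ) :=
  { M | ∃ Λ ω, IsParam G Λ ω ∧ M = phi Λ ω }

/-- The determinant of the submatrix of `M` with rows `A` and columns `B`
(in the increasing order of indices); junk value `0` if `A` and `B` have
different cardinality. -/
noncomputable def subDet {α : Type} [CommRing α] (M : Matrix (Fin n) (Fin n) α)
    (A B : Finset (Fin n)) : α :=
  if h : B.card = A.card then
    Matrix.det (Matrix.of fun p q : Fin A.card =>
      M ((A.orderIsoOfFin rfl p).1) ((B.orderIsoOfFin h q).1))
  else 0

/-- The model `M_{G, i ⊥⊥ j | K}`. -/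
noncomputable def modelCI (G : DAG n) (i j : Fin n) (K : Finset (Fin n)) :
    Set (Matrix (Fin n) (Fin n) ℝ) :=
  { M | M ∈ gaussianModel G ∧ subDet M (insert i K) (insert j K) = 0 }

/-- The polynomial ring `R` in the variables `λ_{ab}` ((a,b) ∈ E) and `ω_a`. -/
abbrev PolyR (n : ℕ) := MvPolynomial (Fin n × Fin n ⊕ Fin n) ℝ

/-- The matrix `L` of indeterminates `λ_{ab}` for edges `(a,b) ∈ E`. -/
noncomputable def Lmat (G : DAG n) : Matrix (Fin n) (Fin n) (PolyR n) :=
  Matrix.of fun a b => if (a, b) ∈ G.E then X (Sum.inl (a, b)) else 0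

/-- The matrix of polynomials `S = (I - L)^{-T} W (I - L)^{-1}`. -/
noncomputable def Smat (G : DAG n) : Matrix (Fin n) (Fin n) (PolyR n) :=
  ((1 - Lmat G)⁻¹)ᵀ * Matrix.diagonal (fun a => X (Sum.inr a)) * (1 - Lmat G)⁻¹

/-- Evaluation of a polynomial in `R` at a parameter point `(Λ, ω)`. -/
noncomputable def evalParam (Λ : Matrix (Fin n) (Fin n) ℝ) (ω : Fin n → ℝ) :
    PolyR n →+* ℝ :=
  MvPolynomial.eval (Sum.elim (fun e : Fin n × Fin n => Λ e.1 e.2) ω)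

/-- `p` is a monomial: a nonzero scalar multiple of a single power product. -/
def IsMonomial (p : PolyR n) : Prop := p.support.card = 1

/-- A directed path in a DAG from `s` to `t`, encoded as for `GPath`. -/
structure DiPath (G : DAG n) (s t : Fin n) where
  len : ℕ
  v : ℕ → Fin n
  start_eq : v 0 = s
  end_eq : v len = t
  inj : ∀ a b : ℕ, a ≤ len → b ≤ len → v a = v b → a = b
  adj : ∀ a : ℕ, a < len → (v a, v (a + 1)) ∈ G.E
  stable : ∀ a : ℕ, len ≤ a → v a = v len

namespace DiPath

variable {G : DAG n} {s t : Fin n}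

/-- `x` lies on the directed path `p`. -/
def onPath (p : DiPath G s t) (x : Fin n) : Prop := ∃ a ≤ p.len, p.v a = x

/-- The directed path `p` traverses the edge `e`. -/
def hasEdge (p : DiPath G s t) (e : Fin n × Fin n) : Prop :=
  ∃ a < p.len, p.v a = e.1 ∧ p.v (a + 1) = e.2

end DiPath

/-- A trek: a pair of directed paths with a common top vertex. -/
structure Trek (G : DAG n) where
  top : Fin n
  left : Fin n
  right : Fin n
  L : DiPath G top left
  R : DiPath G top right

/-- The trek `trk` traverses the edge `e` (on its left or right part). -/
def Trek.hasEdge {G : DAG n} (trk : Trek G) (e : Fin n × Fin n) : Prop :=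
  trk.L.hasEdge e ∨ trk.R.hasEdge e

/-- A trek system from `A` to `B`: a set of treks whose left endpoints exhaust `A`
and whose right endpoints exhaust `B`. -/
def IsTrekSystem (G : DAG n) (A B : Finset (Fin n)) (T : Set (Trek G)) : Prop :=
  Set.BijOn (fun trk => trk.left) T ↑A ∧ Set.BijOn (fun trk => trk.right) T ↑B

/-- The trek system `T` has no sided intersection. -/
def NoSidedIntersection {G : DAG n} (T : Set (Trek G)) : Prop :=
  (∀ t₁ ∈ T, ∀ t₂ ∈ T, t₁ ≠ t₂ → ∀ x : Fin n, t₁.L.onPath x → ¬ t₂.L.onPath x) ∧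
  (∀ t₁ ∈ T, ∀ t₂ ∈ T, t₁ ≠ t₂ → ∀ x : Fin n, t₁.R.onPath x → ¬ t₂.R.onPath x)

/-- The product of the edge variables traversed by a directed path. -/
noncomputable def diMon {G : DAG n} {s t : Fin n} (p : DiPath G s t) : PolyR n :=
  ∏ a ∈ Finset.range p.len, X (Sum.inl (p.v a, p.v (a + 1)))

/-- The trek monomial `m_T = ω_s ∏ λ_{kl}`. -/
noncomputable def trekMon {G : DAG n} (trk : Trek G) : PolyR n :=
  X (Sum.inr trk.top) * diMon trk.L * diMon trk.R

/-- The trek system monomial: product of the trek monomials of its treks. -/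
noncomputable def trekSysMon {G : DAG n} (T : Set (Trek G)) : PolyR n :=
  ∏ᶠ trk ∈ T, trekMon trk

/-- Partial covariance `σ_{x,a·B}`. -/
noncomputable def pCov (M : Matrix (Fin n) (Fin n) ℝ) (x a : Fin n)
    (B : Finset (Fin n)) : ℝ :=
  M x a - ∑ p : {b : Fin n // b ∈ B}, ∑ q : {b : Fin n // b ∈ B},
      M x p.1 *
        (M.submatrix (fun b : {b : Fin n // b ∈ B} => b.1)
          (fun b : {b : Fin n // b ∈ B} => b.1))⁻¹ p q *
      M q.1 a

/-- Partial correlation `ρ_{x,a·B}`. -/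
noncomputable def pCor (M : Matrix (Fin n) (Fin n) ℝ) (x a : Fin n)
    (B : Finset (Fin n)) : ℝ :=
  pCov M x a B / Real.sqrt (pCov M x x B * pCov M a a B)

/-- The DAG obtained by deleting the edge `(a, b)`. -/
def DAG.deleteEdge (G : DAG n) (a b : Fin n) : DAG n where
  E := G.E.erase (a, b)
  acyclic := fun v hv =>
    G.acyclic v (by
      first
        | exact Relation.TransGen.lift id (fun _ _ hxy => Finset.mem_of_mem_erase hxy) hv
        | (have key : ∀ c d : Fin n,
              Relation.TransGen (fun a' b' => (a', b') ∈ G.E.erase (a, b)) c d →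
                Relation.TransGen (fun a' b' => (a', b') ∈ G.E) c d := by
            intro c d hcd
            induction hcd with
            | single h => exact Relation.TransGen.single (Finset.mem_of_mem_erase h)
            | tail _ h ih => exact Relation.TransGen.tail ih (Finset.mem_of_mem_erase h)
           exact key v v hv))

/-- The Gaussian CI statement `A ⊥⊥_Σ B | C`: all `(|C|+1) × (|C|+1)` minors of
the submatrix with rows `A ∪ C` and columns `B ∪ C` vanish. -/
noncomputable def ciHolds (M : Matrix (Fin n) (Fin n) ℝ)
    (A B C : Finset (Fin n)) : Prop :=
  ∀ A' B' : Finset (Fin n), A' ⊆ A ∪ C → B' ⊆ B ∪ C →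
    A'.card = C.card + 1 → B'.card = C.card + 1 → subDet M A' B' = 0

/-- A set of CI statements over `[4]` is gaussoid-closed. -/
def GaussoidClosed (𝒢 : Fin 4 → Fin 4 → Finset (Fin 4) → Prop) : Prop :=
  (∀ a b C, 𝒢 a b C → 𝒢 b a C) ∧
  ∀ i j k : Fin 4, ∀ L : Finset (Fin 4),
    i ≠ j → i ≠ k → j ≠ k → i ∉ L → j ∉ L → k ∉ L →
      ((𝒢 i j L → 𝒢 i k (insert j L) → 𝒢 i k L ∧ 𝒢 i j (insert k L)) ∧
       (𝒢 i j (insert k L) → 𝒢 i k (insert j L) → 𝒢 i j L ∧ 𝒢 i k L) ∧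
       (𝒢 i j L → 𝒢 i k L → 𝒢 i j (insert k L) ∧ 𝒢 i k (insert j L)) ∧
       (𝒢 i j L → 𝒢 i j (insert k L) → 𝒢 i k L ∨ 𝒢 j k L))

end CI


section Statement10Aux

open CI Relation

variable {n : ℕ} {G : DAG n}

abbrev Edg (G : DAG n) (a b : Fin n) : Prop := (a, b) ∈ G.E

lemma edge_asymm {a b : Fin n} (h1 : Edg G a b) (h2 : Edg G b a) : False :=
  G.acyclic a (TransGen.head h1 (TransGen.single h2))

namespace CI.DiPath
variable {s t : Fin n}

lemma reach (m : DiPath G s t) {i j : ℕ} (hij : i ≤ j) (hj : j ≤ m.len) :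
    ReflTransGen (Edg G) (m.v i) (m.v j) := by
  induction j with
  | zero =>
    have : i = 0 := by omega
    subst this; exact ReflTransGen.refl
  | succ j ih =>
    rcases Nat.lt_or_ge i (j+1) with h | h
    · exact ReflTransGen.tail (ih (by omega) (by omega)) (m.adj j (by omega))
    · have : i = j + 1 := by omega
      subst this; exact ReflTransGen.refl

/-- The single-vertex directed path. -/
def single (G : DAG n) (v : Fin n) : DiPath G v v where
  len := 0
  v := fun _ => v
  start_eq := rfl
  end_eq := rfl
  inj := by omega
  adj := by omega
  stable := fun _ _ => rfl

/-- Prepend a vertex to a directed path. -/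
def cons {b d : Fin n} (m : DiPath G b d) (a : Fin n) (hab : Edg G a b)
    (hnot : ∀ u ≤ m.len, m.v u ≠ a) : DiPath G a d where
  len := m.len + 1
  v := fun u => if u = 0 then a else m.v (u - 1)
  start_eq := by simp
  end_eq := by simp [m.end_eq]
  inj := by
    intro u1 u2 h1 h2 he
    by_cases e1 : u1 = 0 <;> by_cases e2 : u2 = 0 <;> simp [e1, e2] at he ⊢
    · exact absurd he.symm (hnot (u2-1) (by omega))
    · exact absurd he (hnot (u1-1) (by omega))
    · have := m.inj (u1-1) (u2-1) (by omega) (by omega) he; omega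
  adj := by
    intro u hu
    by_cases e : u = 0
    · subst e; simpa [m.start_eq] using hab
    · have h1 : ¬ (u + 1 = 0) := by omega
      simp only [if_neg e, if_neg h1]
      have h2 := m.adj (u-1) (by omega)
      have he : u + 1 - 1 = (u - 1) + 1 := by omega
      rw [he]; exact h2
  stable := by
    intro u hu
    have : ¬ (u = 0) := by omega
    have h2 : ¬ (m.len + 1 = 0) := by omega
    simp only [if_neg this, if_neg h2]
    rw [m.stable (u-1) (by omega)]; congr 1

/-- Drop the first `a` steps of a directed path. -/
def dropFrom (m : DiPath G s t) (a : ℕ) (ha : a ≤ m.len) : DiPath G (m.v a) t where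
  len := m.len - a
  v := fun i => m.v (a + i)
  start_eq := by simp
  end_eq := by
    show m.v (a + (m.len - a)) = t
    have : a + (m.len - a) = m.len := by omega
    rw [this, m.end_eq]
  inj := by
    intro i j hi hj he
    have := m.inj (a+i) (a+j) (by omega) (by omega) he; omega
  adj := fun i hi => by
    show (m.v (a + i), m.v (a + (i+1))) ∈ G.E
    have := m.adj (a+i) (by omega)
    have he : a + (i + 1) = (a + i) + 1 := by omega
    rw [he]; exact this
  stable := by
    intro i hi
    show m.v (a + i) = m.v (a + (m.len - a))
    have h1 : m.len ≤ a + i := by omega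
    have h2 : a + (m.len - a) = m.len := by omega
    rw [m.stable _ h1, h2]

/-- Change the endpoints of a directed path along equalities. -/
def copy (m : DiPath G s t) {s' t' : Fin n} (hs : s = s') (ht : t = t') :
    DiPath G s' t' where
  len := m.len
  v := m.v
  start_eq := m.start_eq.trans hs
  end_eq := m.end_eq.trans ht
  inj := m.inj
  adj := m.adj
  stable := m.stable

@[simp] lemma copy_len (m : DiPath G s t) {s' t' : Fin n} (hs : s = s') (ht : t = t') :
    (m.copy hs ht).len = m.len := rfl
@[simp] lemma copy_v (m : DiPath G s t) {s' t' : Fin n} (hs : s = s') (ht : t = t') :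
    (m.copy hs ht).v = m.v := rfl

end CI.DiPath

/-- From a descendant relation get a directed path hitting `K` only at its end. -/
lemma exists_dipath_to_K (K : Finset (Fin n)) {v d : Fin n} (hd : G.desc v d)
    (hdK : d ∈ K) :
    ∃ k ∈ K, ∃ m : DiPath G v k, ∀ i < m.len, m.v i ∉ K := by
  induction hd using ReflTransGen.head_induction_on with
  | refl =>
    refine ⟨d, hdK, DiPath.single G d, ?_⟩
    intro i hi; simp [DiPath.single] at hi
  | head hab _ ih =>
    rename_i a c _
    by_cases haK : a ∈ K
    · refine ⟨a, haK, DiPath.single G a, ?_⟩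
      intro i hi; simp [DiPath.single] at hi
    · obtain ⟨k, hk, m, hm⟩ := ih
      have hnot : ∀ u ≤ m.len, m.v u ≠ a := by
        intro u hu he
        apply G.acyclic a
        have hr := m.reach (Nat.zero_le u) hu
        rw [m.start_eq, he] at hr
        exact TransGen.head' hab hr
      refine ⟨k, hk, m.cons a hab hnot, ?_⟩
      intro i hi
      simp only [DiPath.cons] at hi ⊢
      by_cases e : i = 0
      · simpa [e] using haK
      · simp only [if_neg e]; exact hm (i-1) (by omega)

namespace CI.GPath
variable {n : ℕ} {G : DAG n} {i j : Fin n}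

/-- Reverse an undirected path. -/
def rev (p : GPath G i j) : GPath G j i where
  len := p.len
  v := fun t => p.v (p.len - t)
  start_eq := by simp [p.end_eq]
  end_eq := by simp [p.start_eq]
  inj := by
    intro s t hs ht he
    have := p.inj _ _ (Nat.sub_le _ _) (Nat.sub_le _ _) he
    omega
  adj := by
    intro t ht
    show (p.v (p.len - t), p.v (p.len - (t+1))) ∈ G.E ∨ (p.v (p.len - (t+1)), p.v (p.len - t)) ∈ G.E
    have := p.adj (p.len - t - 1) (by omega)
    have h1 : p.len - (t+1) = p.len - t - 1 := by omega
    have h2 : p.len - t = (p.len - t - 1) + 1 := by omega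
    rw [h1, h2]
    exact this.symm
  stable := by
    intro t ht
    show p.v (p.len - t) = p.v (p.len - p.len)
    have h1 : p.len - t = 0 := by omega
    have h2 : p.len - p.len = 0 := by omega
    rw [h1, h2]

@[simp] lemma rev_len (p : GPath G i j) : p.rev.len = p.len := rfl
lemma rev_v (p : GPath G i j) (t : ℕ) : p.rev.v t = p.v (p.len - t) := rfl

lemma rev_isCollider (p : GPath G i j) {t : ℕ} (h1 : 0 < t) (h2 : t < p.len) :
    p.rev.IsCollider t ↔ p.IsCollider (p.len - t) := by
  unfold IsCollider
  rw [rev_len, rev_v, rev_v, rev_v]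
  have e1 : p.len - (t-1) = (p.len - t) + 1 := by omega
  have e2 : p.len - (t+1) = (p.len - t) - 1 := by omega
  rw [e1, e2]
  constructor
  · rintro ⟨-, -, hA, hB⟩
    exact ⟨by omega, by omega, hB, hA⟩
  · rintro ⟨-, -, hA, hB⟩
    exact ⟨h1, h2, hB, hA⟩

end CI.GPath

open CI Relation Classical

noncomputable section
variable {n : ℕ} {G : DAG n}

/-- A configuration: a d-connecting-style path together with a system of
directed paths from its colliders into `K`. -/
structure Cfg (G : DAG n) (x y : Fin n) (K : Finset (Fin n)) where
  p : GPath G x y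
  nonc : ∀ t, 0 < t → t < p.len → ¬ p.IsCollider t → p.v t ∉ K
  k : ℕ → Fin n
  q : ∀ t, p.IsCollider t → DiPath G (p.v t) (k t)
  kK : ∀ t (h : p.IsCollider t), k t ∈ K
  q_notK : ∀ t (h : p.IsCollider t), ∀ i < (q t h).len, (q t h).v i ∉ K

variable {x y : Fin n} {K : Finset (Fin n)}

/-- length of the collider path at `t` (0 at non-colliders). -/
noncomputable def qm (c : Cfg G x y K) (t : ℕ) : ℕ :=
  if h : c.p.IsCollider t then (c.q t h).len else 0

noncomputable def msr (c : Cfg G x y K) : ℕ :=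
  c.p.len + ∑ t ∈ Finset.range c.p.len, qm c t

lemma qm_eq (c : Cfg G x y K) {t : ℕ} (h : c.p.IsCollider t) :
    qm c t = (c.q t h).len := dif_pos h

lemma qm_eq_zero (c : Cfg G x y K) {t : ℕ} (h : ¬ c.p.IsCollider t) :
    qm c t = 0 := dif_neg h

/-- Reverse a configuration. -/
noncomputable def Cfg.rev (c : Cfg G x y K) : Cfg G y x K where
  p := c.p.rev
  nonc := by
    intro t h1 h2 hnc
    have hL : c.p.rev.len = c.p.len := rfl
    rw [hL] at h2
    rw [GPath.rev_v]
    refine c.nonc (c.p.len - t) (by omega) (by omega) ?_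
    rw [← c.p.rev_isCollider h1 h2]
    exact hnc
  k := fun t => c.k (c.p.len - t)
  q := fun t h => by
    have h1 : 0 < t := h.1
    have h2 : t < c.p.len := h.2.1
    exact (c.q (c.p.len - t) ((c.p.rev_isCollider h1 h2).mp h)).copy rfl rfl
  kK := by
    intro t h
    exact c.kK _ ((c.p.rev_isCollider h.1 h.2.1).mp h)
  q_notK := by
    intro t h i hi
    exact c.q_notK _ ((c.p.rev_isCollider h.1 h.2.1).mp h) i hi

lemma qm_rev (c : Cfg G x y K) (t : ℕ) (ht : t < c.p.len) :
    qm c.rev t = qm c (c.p.len - t) := by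
  by_cases h0 : 0 < t
  · by_cases h : c.p.rev.IsCollider t
    · rw [qm_eq c.rev h, qm_eq c ((c.p.rev_isCollider h0 ht).mp h)]
      rfl
    · rw [qm_eq_zero c.rev h, qm_eq_zero c]
      rw [← c.p.rev_isCollider h0 ht]
      exact h
  · have ht0 : t = 0 := by omega
    subst ht0
    rw [qm_eq_zero c.rev (fun h => by exact absurd h.1 (by omega)),
        qm_eq_zero c (fun h => by have := h.2.1; omega)]

lemma msr_rev (c : Cfg G x y K) : msr c.rev = msr c := by
  unfold msr
  have hlen : c.rev.p.len = c.p.len := rfl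
  rw [hlen]
  congr 1
  set L := c.p.len with hL
  have h1 : ∀ t ∈ Finset.range L, qm c.rev t = qm c (L - t) := by
    intro t ht
    exact qm_rev c t (Finset.mem_range.mp ht)
  rw [Finset.sum_congr rfl h1]
  have h2 : ∀ t ∈ Finset.range L, qm c (L - t) = (fun j => qm c (j+1)) (L - 1 - t) := by
    intro t ht
    have := Finset.mem_range.mp ht
    congr 1
    omega
  rw [Finset.sum_congr rfl h2, Finset.sum_range_reflect (fun j => qm c (j+1)) L]
  have h3 : ∑ j ∈ Finset.range (L+1), qm c j
      = (∑ j ∈ Finset.range L, qm c (j+1)) + qm c 0 := Finset.sum_range_succ' _ _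
  have h4 : ∑ j ∈ Finset.range (L+1), qm c j
      = (∑ j ∈ Finset.range L, qm c j) + qm c L := Finset.sum_range_succ _ _
  have h5 : qm c 0 = 0 := qm_eq_zero c (fun h => by have := h.1; omega)
  have h6 : qm c L = 0 := qm_eq_zero c (fun h => by have := h.2.1; omega)
  omega

/-- Existence of an initial configuration. -/
lemma cfg_exists (hnd : ¬ G.dSep x y K) : Nonempty (Cfg G x y K) := by
  rw [DAG.dSep] at hnd
  push_neg at hnd
  obtain ⟨p, hp⟩ := hnd
  have H : ∀ t, p.IsCollider t → ∃ k ∈ K, ∃ m : DiPath G (p.v t) k,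
      ∀ i < m.len, m.v i ∉ K := by
    intro t h
    obtain ⟨d, hd, hdesc⟩ := hp.2 t h
    exact exists_dipath_to_K K hdesc hd
  have : Inhabited (Fin n) := ⟨x⟩
  choose! k hkK m hm using H
  exact ⟨⟨p, hp.1, k, m, hkK, hm⟩⟩

end

noncomputable section
open CI Relation Classical
variable {n : ℕ} {G : DAG n} {x y : Fin n} {K : Finset (Fin n)}

/-- Build a configuration from a path plus per-collider data, with a measure bound. -/
lemma cfg_mk' (p' : GPath G x y)
    (hn : ∀ t, 0 < t → t < p'.len → ¬ p'.IsCollider t → p'.v t ∉ K)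
    (B : ℕ → ℕ)
    (hq : ∀ t, p'.IsCollider t → ∃ k ∈ K, ∃ m : DiPath G (p'.v t) k,
        (∀ i < m.len, m.v i ∉ K) ∧ m.len ≤ B t) :
    ∃ c' : Cfg G x y K, msr c' ≤ p'.len + ∑ t ∈ Finset.range p'.len, B t := by
  have H2 : ∀ t, ∃ kk : Fin n, p'.IsCollider t → kk ∈ K ∧
      ∃ m : DiPath G (p'.v t) kk, (∀ i < m.len, m.v i ∉ K) ∧ m.len ≤ B t := by
    intro t
    by_cases h : p'.IsCollider t
    · obtain ⟨k, hk, m, hm1, hm2⟩ := hq t h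
      exact ⟨k, fun _ => ⟨hk, m, hm1, hm2⟩⟩
    · exact ⟨x, fun h' => absurd h' h⟩
  choose k hk using H2
  refine ⟨⟨p', hn, k, fun t ht => ((hk t ht).2).choose,
    fun t ht => (hk t ht).1, fun t ht => ((hk t ht).2).choose_spec.1⟩, ?_⟩
  unfold msr
  simp only
  gcongr with t ht
  by_cases h : p'.IsCollider t
  · rw [qm_eq _ h]
    exact ((hk t h).2).choose_spec.2
  · rw [qm_eq_zero _ h]
    exact Nat.zero_le _

/-- Surgery A (case `t₀ < s`), abstract version. -/
lemma surgeryA_half (p : GPath G x y) (t₀ s a : ℕ) (h : p.IsCollider t₀)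
    (noncP : ∀ t, 0 < t → t < p.len → ¬ p.IsCollider t → p.v t ∉ K)
    (qmf : ℕ → ℕ)
    (hqmf : ∀ t, p.IsCollider t → ∃ k ∈ K, ∃ mm : DiPath G (p.v t) k,
        (∀ i < mm.len, mm.v i ∉ K) ∧ mm.len ≤ qmf t)
    (kv : Fin n) (hkv : kv ∈ K) (m : DiPath G (p.v t₀) kv)
    (hmnotK : ∀ i < m.len, m.v i ∉ K) (hmq : m.len ≤ qmf t₀)
    (hs : s ≤ p.len) (hst : t₀ < s)
    (ha1 : 1 ≤ a) (ha2 : a ≤ m.len)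
    (hav : m.v a = p.v s)
    (hmin : ∀ i, 1 ≤ i → i < a → ∀ u ≤ p.len, m.v i ≠ p.v u) :
    ∃ c' : Cfg G x y K, msr c' < p.len + ∑ t ∈ Finset.range p.len, qmf t := by
  have ht0 : 0 < t₀ := h.1
  have ht0L : t₀ < p.len := h.2.1
  have hm0 : m.v 0 = p.v t₀ := m.start_eq
  -- the new vertex function
  obtain ⟨v', hv1, hv2, hv3⟩ :
      ∃ v' : ℕ → Fin n, (∀ u, u ≤ t₀ → v' u = p.v u) ∧
        (∀ i, i ≤ a → v' (t₀ + i) = m.v i) ∧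
        (∀ j, v' (t₀ + a + j) = p.v (s + j)) := by
    refine ⟨fun u => if u ≤ t₀ then p.v u else if u ≤ t₀ + a then m.v (u - t₀)
      else p.v (u - (t₀ + a) + s), ?_, ?_, ?_⟩
    · intro u hu; beta_reduce; rw [if_pos hu]
    · intro i hi; beta_reduce
      by_cases h0 : i = 0
      · subst h0; rw [if_pos (by omega)]; simpa using hm0.symm
      · rw [if_neg (by omega), if_pos (by omega)]
        congr 1; omega
    · intro j; beta_reduce
      by_cases h0 : j = 0
      · subst h0
        rw [if_neg (by omega), if_pos (by omega)]
        simp only [Nat.add_zero]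
        have e : t₀ + a - t₀ = a := by omega
        rw [e, hav]
      · rw [if_neg (by omega), if_neg (by omega)]
        congr 1; omega
  have hvend : ∀ u, t₀ + a + (p.len - s) ≤ u → v' u = p.v p.len := by
    intro u hu
    have e : u = t₀ + a + (u - t₀ - a) := by omega
    rw [e, hv3 (u - t₀ - a)]
    rcases Nat.lt_or_ge (s + (u - t₀ - a)) (p.len + 1) with h1 | h1
    · congr 1; omega
    · rw [p.stable (s + (u - t₀ - a)) (by omega)]
  -- disjointness facts
  have F1 : ∀ u, u ≤ t₀ → ∀ i, 1 ≤ i → i ≤ a → p.v u ≠ m.v i := by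
    intro u hu i hi1 hi2 he
    rcases Nat.lt_or_ge i a with hlt | hge
    · exact hmin i hi1 hlt u (by omega) he.symm
    · have hia : i = a := by omega
      rw [hia, hav] at he
      have := p.inj u s (by omega) hs he
      omega
  have F3 : ∀ i, 1 ≤ i → i ≤ a → ∀ u, s < u → u ≤ p.len → m.v i ≠ p.v u := by
    intro i hi1 hi2 u hu1 hu2 he
    rcases Nat.lt_or_ge i a with hlt | hge
    · exact hmin i hi1 hlt u hu2 he
    · have hia : i = a := by omega
      rw [hia, hav] at he
      have := p.inj s u hs hu2 he
      omega
  have classify : ∀ u, u ≤ t₀ + a + (p.len - s) →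
      (u ≤ t₀) ∨ (∃ i, 1 ≤ i ∧ i ≤ a ∧ u = t₀ + i) ∨
      (∃ j, 1 ≤ j ∧ j ≤ p.len - s ∧ u = t₀ + a + j) := by
    intro u hu
    rcases Nat.lt_or_ge u (t₀+1) with h1 | h1
    · exact Or.inl (by omega)
    rcases Nat.lt_or_ge u (t₀+a+1) with h2 | h2
    · exact Or.inr (Or.inl ⟨u - t₀, by omega, by omega, by omega⟩)
    · exact Or.inr (Or.inr ⟨u - t₀ - a, by omega, by omega, by omega⟩)
  have hinj : ∀ u1, u1 ≤ t₀ + a + (p.len - s) → ∀ u2, u2 ≤ t₀ + a + (p.len - s) →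
      v' u1 = v' u2 → u1 = u2 := by
    intro u1 hu1 u2 hu2 he
    rcases classify u1 hu1 with hA1 | ⟨i1, hi11, hi12, rfl⟩ | ⟨j1, hj11, hj12, rfl⟩ <;>
      rcases classify u2 hu2 with hA2 | ⟨i2, hi21, hi22, rfl⟩ | ⟨j2, hj21, hj22, rfl⟩
    · rw [hv1 u1 hA1, hv1 u2 hA2] at he
      exact p.inj u1 u2 (by omega) (by omega) he
    · rw [hv1 u1 hA1, hv2 i2 hi22] at he
      exact absurd he (F1 u1 hA1 i2 hi21 hi22)
    · rw [hv1 u1 hA1, hv3 j2] at he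
      have := p.inj u1 (s + j2) (by omega) (by omega) he
      omega
    · rw [hv2 i1 hi12, hv1 u2 hA2] at he
      exact absurd he.symm (F1 u2 hA2 i1 hi11 hi12)
    · rw [hv2 i1 hi12, hv2 i2 hi22] at he
      have := m.inj i1 i2 (by omega) (by omega) he
      omega
    · rw [hv2 i1 hi12, hv3 j2] at he
      exact absurd he (F3 i1 hi11 hi12 (s + j2) (by omega) (by omega))
    · rw [hv3 j1, hv1 u2 hA2] at he
      have := p.inj (s + j1) u2 (by omega) (by omega) he
      omega
    · rw [hv3 j1, hv2 i2 hi22] at he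
      exact absurd he.symm (F3 i2 hi21 hi22 (s + j1) (by omega) (by omega))
    · rw [hv3 j1, hv3 j2] at he
      have := p.inj (s + j1) (s + j2) (by omega) (by omega) he
      omega
  have hadj : ∀ u, u < t₀ + a + (p.len - s) →
      (v' u, v' (u+1)) ∈ G.E ∨ (v' (u+1), v' u) ∈ G.E := by
    intro u hu
    rcases Nat.lt_or_ge u t₀ with h1 | h1
    · rw [hv1 u (by omega), hv1 (u+1) (by omega)]
      exact p.adj u (by omega)
    rcases Nat.lt_or_ge u (t₀ + a) with h2 | h2
    · obtain ⟨i, rfl⟩ : ∃ i, u = t₀ + i := ⟨u - t₀, by omega⟩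
      rw [show t₀ + i + 1 = t₀ + (i+1) by omega, hv2 (i+1) (by omega), hv2 i (by omega)]
      exact Or.inl (m.adj i (by omega))
    · obtain ⟨j, rfl⟩ : ∃ j, u = t₀ + a + j := ⟨u - t₀ - a, by omega⟩
      rw [show t₀ + a + j + 1 = t₀ + a + (j+1) by omega, hv3 (j+1), hv3 j]
      have := p.adj (s + j) (by omega)
      rw [show s + j + 1 = s + (j + 1) by omega] at this
      exact this
  set p' : GPath G x y := ⟨t₀ + a + (p.len - s), v',
    by rw [hv1 0 (by omega)]; exact p.start_eq,
    by rw [hvend _ le_rfl]; exact p.end_eq,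
    fun s t hs ht he => hinj s hs t ht he,
    hadj,
    fun t ht => by rw [hvend t ht, hvend _ le_rfl]⟩ with hp'
  have hp'len : p'.len = t₀ + a + (p.len - s) := rfl
  have hp'v : p'.v = v' := rfl
  -- collider analysis
  have hCA : ∀ u, 0 < u → u < t₀ → (p'.IsCollider u ↔ p.IsCollider u) := by
    intro u h0 hu
    unfold GPath.IsCollider
    rw [hp'len, hp'v, hv1 u (by omega), hv1 (u-1) (by omega), hv1 (u+1) (by omega)]
    constructor
    · rintro ⟨-, -, hA, hB⟩; exact ⟨h0, by omega, hA, hB⟩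
    · rintro ⟨-, -, hA, hB⟩; exact ⟨h0, by omega, hA, hB⟩
  have hCB : ∀ i, i < a → ¬ p'.IsCollider (t₀ + i) := by
    intro i hi hcol
    have hB := hcol.2.2.2
    rw [hp'v] at hB
    rw [show t₀ + i + 1 = t₀ + (i + 1) by omega, hv2 (i+1) (by omega),
      hv2 i (by omega)] at hB
    exact edge_asymm (m.adj i (by omega)) hB
  have hCC : ∀ j, 1 ≤ j → (p'.IsCollider (t₀ + a + j) ↔ p.IsCollider (s + j)) := by
    intro j hj
    unfold GPath.IsCollider
    rw [hp'len, hp'v]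
    rw [show t₀ + a + j - 1 = t₀ + a + (j - 1) by omega,
      show t₀ + a + j + 1 = t₀ + a + (j + 1) by omega,
      hv3 (j-1), hv3 (j+1), hv3 j,
      show s + (j - 1) = s + j - 1 by omega,
      show s + (j + 1) = s + j + 1 by omega]
    constructor
    · rintro ⟨-, hlt, hA, hB⟩
      exact ⟨by omega, by omega, hA, hB⟩
    · rintro ⟨-, hlt, hA, hB⟩
      exact ⟨by omega, by omega, hA, hB⟩
  -- non-collider condition for p'
  have hnonc : ∀ u, 0 < u → u < p'.len → ¬ p'.IsCollider u → p'.v u ∉ K := by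
    intro u h0 hu hnc
    rw [hp'len] at hu
    rw [hp'v]
    rcases classify u (by omega) with hA1 | ⟨i, hi1, hi2, rfl⟩ | ⟨j, hj1, hj2, rfl⟩
    · rcases Nat.lt_or_ge u t₀ with hlt | hge
      · rw [hv1 u (by omega)]
        exact noncP u h0 (by omega) (fun hc => hnc ((hCA u h0 hlt).mpr hc))
      · rw [show u = t₀ by omega, hv1 t₀ le_rfl, ← hm0]
        exact hmnotK 0 (by omega)
    · rcases Nat.lt_or_ge i a with hlt | hge
      · rw [hv2 i (by omega)]
        exact hmnotK i (by omega)
      · -- i = a : the junction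
        have hia : t₀ + i = t₀ + a := by omega
        have hsL : s < p.len := by omega
        rw [hia] at hnc ⊢
        rw [hv2 a le_rfl, hav]
        intro hK
        by_cases hcs : p.IsCollider s
        · apply hnc
          refine ⟨by omega, by rw [hp'len]; omega, ?_, ?_⟩
          · rw [hp'v]
            rw [show t₀ + a - 1 = t₀ + (a - 1) by omega, hv2 (a-1) (by omega),
              hv2 a le_rfl]
            have := m.adj (a-1) (by omega)
            rw [show a - 1 + 1 = a by omega] at this
            exact this
          · rw [hp'v]
            have e5 : v' (t₀ + a) = p.v s := by simpa using hv3 0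
            have e6 : v' (t₀ + a + 1) = p.v (s+1) := by simpa using hv3 1
            rw [e5, e6]
            exact hcs.2.2.2
        · exact noncP s (by omega) hsL hcs hK
    · rw [hv3 j]
      exact noncP (s + j) (by omega) (by omega) (fun hc => hnc ((hCC j hj1).mpr hc))
  -- the bound function
  set B : ℕ → ℕ := fun u => if u < t₀ then qmf u else if u < t₀ + a then 0
    else if u = t₀ + a then m.len - a else qmf (u - (t₀ + a) + s) with hBdef
  have hB1 : ∀ u, u < t₀ → B u = qmf u := by
    intro u hu; rw [hBdef]; beta_reduce; rw [if_pos hu]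
  have hB2 : ∀ u, t₀ ≤ u → u < t₀ + a → B u = 0 := by
    intro u hu1 hu2; rw [hBdef]; beta_reduce; rw [if_neg (by omega), if_pos (by omega)]
  have hB3 : B (t₀ + a) = m.len - a := by
    rw [hBdef]; beta_reduce; rw [if_neg (by omega), if_neg (by omega), if_pos rfl]
  have hB4 : ∀ u, t₀ + a < u → B u = qmf (u - (t₀ + a) + s) := by
    intro u hu; rw [hBdef]; beta_reduce
    rw [if_neg (by omega), if_neg (by omega), if_neg (by omega)]
  -- per-collider data for p'
  have hq : ∀ u, p'.IsCollider u → ∃ k ∈ K, ∃ mm : DiPath G (p'.v u) k,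
      (∀ i < mm.len, mm.v i ∉ K) ∧ mm.len ≤ B u := by
    intro u hcol
    have hu0 : 0 < u := hcol.1
    have huL : u < p'.len := hcol.2.1
    rw [hp'len] at huL
    rcases classify u (by omega) with hA1 | ⟨i, hi1, hi2, rfl⟩ | ⟨j, hj1, hj2, rfl⟩
    · have hlt : u < t₀ := by
        rcases Nat.lt_or_ge u t₀ with hlt | hge
        · exact hlt
        · exfalso
          have he : u = t₀ + 0 := by omega
          rw [he] at hcol
          exact hCB 0 (by omega) hcol
      have hcolp : p.IsCollider u := (hCA u hu0 hlt).mp hcol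
      obtain ⟨k, hkK, mm, hmm1, hmm2⟩ := hqmf u hcolp
      refine ⟨k, hkK, mm.copy ?_ rfl, hmm1, ?_⟩
      · rw [hp'v, hv1 u (by omega)]
      · rw [hB1 u hlt]; exact hmm2
    · rcases Nat.lt_or_ge i a with hlt | hge
      · exact absurd hcol (hCB i hlt)
      · have hia : t₀ + i = t₀ + a := by omega
        rw [hia]
        refine ⟨kv, hkv, (m.dropFrom a ha2).copy ?_ rfl, ?_, ?_⟩
        · show m.v a = p'.v (t₀ + a)
          rw [hp'v, hv2 a le_rfl]
        · intro i' hi'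
          simp only [DiPath.copy_len] at hi'
          show m.v (a + i') ∉ K
          refine hmnotK (a + i') ?_
          have : (m.dropFrom a ha2).len = m.len - a := rfl
          omega
        · rw [hB3]
          show m.len - a ≤ m.len - a
          exact le_rfl
    · have hcolp : p.IsCollider (s + j) := (hCC j hj1).mp hcol
      obtain ⟨k, hkK, mm, hmm1, hmm2⟩ := hqmf (s + j) hcolp
      refine ⟨k, hkK, mm.copy ?_ rfl, hmm1, ?_⟩
      · rw [hp'v, hv3 j]
      · rw [hB4 _ (by omega)]
        rw [show t₀ + a + j - (t₀ + a) + s = s + j by omega]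
        exact hmm2
  obtain ⟨c', hc'⟩ := cfg_mk' p' hnonc B hq
  -- final measure comparison
  rw [hp'len] at hc'
  refine ⟨c', lt_of_le_of_lt hc' ?_⟩
  have hS1 : ∑ u ∈ Finset.range t₀, B u = ∑ u ∈ Finset.range t₀, qmf u :=
    Finset.sum_congr rfl (fun u hu => hB1 u (Finset.mem_range.mp hu))
  have hsplit : ∑ u ∈ Finset.range (t₀ + a + (p.len - s)), B u
      = ∑ u ∈ Finset.range t₀, B u + ∑ i ∈ Finset.range (a + (p.len - s)), B (t₀ + i) := by
    rw [show t₀ + a + (p.len - s) = t₀ + (a + (p.len - s)) by omega,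
      Finset.sum_range_add]
  have hS2 : ∑ i ∈ Finset.range (a + (p.len - s)), B (t₀ + i)
      ≤ (m.len - a) + ∑ r ∈ Finset.range (p.len - s - 1), qmf (s + 1 + r) := by
    rcases Nat.eq_zero_or_pos (p.len - s) with h0 | h0
    · rw [h0]
      simp only [Nat.add_zero]
      rw [Finset.sum_congr rfl (fun i hi => hB2 (t₀ + i) (by omega)
        (by have := Finset.mem_range.mp hi; omega))]
      simp
    · rw [show a + (p.len - s) = a + 1 + (p.len - s - 1) by omega,
        Finset.sum_range_add, Finset.sum_range_add]
      have hz : ∑ i ∈ Finset.range a, B (t₀ + i) = 0 := by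
        rw [Finset.sum_congr rfl (fun i hi => hB2 (t₀ + i) (by omega)
          (by have := Finset.mem_range.mp hi; omega))]
        simp
      have hone : ∑ i ∈ Finset.range 1, B (t₀ + (a + i)) = m.len - a := by
        simp only [Finset.range_one, Finset.sum_singleton, Nat.add_zero]
        exact hB3
      rw [hz, hone]
      simp only [Nat.zero_add]
      apply Nat.add_le_add_left
      apply Finset.sum_le_sum
      intro r hr
      rw [hB4 (t₀ + (a + 1 + r)) (by omega)]
      apply le_of_eq
      congr 1
      omega
  have hold : ∑ u ∈ Finset.range t₀, qmf u + qmf t₀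
        + ∑ r ∈ Finset.range (p.len - s - 1), qmf (s + 1 + r)
      ≤ ∑ u ∈ Finset.range p.len, qmf u := by
    have h2 : ∑ u ∈ Finset.range (t₀+1), qmf u
        = ∑ u ∈ Finset.range t₀, qmf u + qmf t₀ := Finset.sum_range_succ _ _
    rcases Nat.lt_or_ge s p.len with hsl | hsl
    · have e : p.len = (s + 1) + (p.len - s - 1) := by omega
      conv_rhs => rw [e]
      rw [Finset.sum_range_add]
      have h1 : ∑ u ∈ Finset.range (t₀+1), qmf u ≤ ∑ u ∈ Finset.range (s+1), qmf u :=
        Finset.sum_le_sum_of_subset (Finset.range_subset_range.mpr (by omega))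
      omega
    · have hz : p.len - s - 1 = 0 := by omega
      rw [hz]
      have h1 : ∑ u ∈ Finset.range (t₀+1), qmf u ≤ ∑ u ∈ Finset.range p.len, qmf u :=
        Finset.sum_le_sum_of_subset (Finset.range_subset_range.mpr (by omega))
      simp only [Finset.range_zero, Finset.sum_empty]
      omega
  have hMa : m.len - a ≤ qmf t₀ - a := by omega
  omega

/-- Surgery B: two collider paths intersect; abstract version. -/
lemma surgeryB (p : GPath G x y) (t t' a b : ℕ) (h : p.IsCollider t)
    (h' : p.IsCollider t') (htt : t < t')
    (noncP : ∀ u, 0 < u → u < p.len → ¬ p.IsCollider u → p.v u ∉ K)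
    (qmf : ℕ → ℕ)
    (hqmf : ∀ u, p.IsCollider u → ∃ k ∈ K, ∃ mm : DiPath G (p.v u) k,
        (∀ i < mm.len, mm.v i ∉ K) ∧ mm.len ≤ qmf u)
    (kv kv' : Fin n) (hkv : kv ∈ K) (hkv' : kv' ∈ K)
    (m : DiPath G (p.v t) kv) (m' : DiPath G (p.v t') kv')
    (hmnotK : ∀ i < m.len, m.v i ∉ K) (hm'notK : ∀ i < m'.len, m'.v i ∉ K)
    (hmq : m.len ≤ qmf t) (hm'q : m'.len ≤ qmf t')
    (ha1 : 1 ≤ a) (ha2 : a ≤ m.len) (hb1 : 1 ≤ b) (hb2 : b ≤ m'.len)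
    (hav : m.v a = m'.v b)
    (hminrow : ∀ i, 1 ≤ i → i < a → ∀ j ≤ m'.len, m.v i ≠ m'.v j)
    (D1 : ∀ i, 1 ≤ i → i ≤ m.len → ∀ u ≤ p.len, m.v i ≠ p.v u)
    (D2 : ∀ j, 1 ≤ j → j ≤ m'.len → ∀ u ≤ p.len, m'.v j ≠ p.v u) :
    ∃ c' : Cfg G x y K, msr c' < p.len + ∑ u ∈ Finset.range p.len, qmf u := by
  have ht0 : 0 < t := h.1
  have htL : t < p.len := h.2.1
  have ht'0 : 0 < t' := h'.1
  have ht'L : t' < p.len := h'.2.1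
  have hm0 : m.v 0 = p.v t := m.start_eq
  have hm'0 : m'.v 0 = p.v t' := m'.start_eq
  -- the new vertex function
  obtain ⟨v', hv1, hv2, hv3, hv4⟩ :
      ∃ v' : ℕ → Fin n, (∀ u, u ≤ t → v' u = p.v u) ∧
        (∀ i, i ≤ a → v' (t + i) = m.v i) ∧
        (∀ j, j ≤ b → v' (t + a + j) = m'.v (b - j)) ∧
        (∀ j, v' (t + a + b + j) = p.v (t' + j)) := by
    refine ⟨fun u => if u ≤ t then p.v u else if u ≤ t + a then m.v (u - t)
      else if u ≤ t + a + b then m'.v (b - (u - t - a))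
      else p.v (u - (t + a + b) + t'), ?_, ?_, ?_, ?_⟩
    · intro u hu; beta_reduce; rw [if_pos hu]
    · intro i hi; beta_reduce
      by_cases h0 : i = 0
      · subst h0; rw [if_pos (by omega)]; simpa using hm0.symm
      · rw [if_neg (by omega), if_pos (by omega)]
        congr 1; omega
    · intro j hj; beta_reduce
      by_cases h0 : j = 0
      · subst h0
        rw [if_neg (by omega), if_pos (by omega)]
        simp only [Nat.add_zero, Nat.sub_zero]
        rw [show t + a - t = a by omega, hav]
      · rw [if_neg (by omega), if_neg (by omega), if_pos (by omega)]
        congr 1; omega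
    · intro j; beta_reduce
      by_cases h0 : j = 0
      · subst h0
        rw [if_neg (by omega), if_neg (by omega), if_pos (by omega)]
        simp only [Nat.add_zero]
        rw [show b - (t + a + b - t - a) = 0 by omega, hm'0]
      · rw [if_neg (by omega), if_neg (by omega), if_neg (by omega)]
        congr 1; omega
  have hvend : ∀ u, t + a + b + (p.len - t') ≤ u → v' u = p.v p.len := by
    intro u hu
    rw [show u = t + a + b + (u - t - a - b) by omega, hv4 (u - t - a - b)]
    rcases Nat.lt_or_ge (t' + (u - t - a - b)) (p.len + 1) with h1 | h1
    · congr 1; omega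
    · rw [p.stable (t' + (u - t - a - b)) (by omega)]
  have classify : ∀ u, u ≤ t + a + b + (p.len - t') →
      (u ≤ t) ∨ (∃ i, 1 ≤ i ∧ i ≤ a ∧ u = t + i) ∨
      (∃ j, 1 ≤ j ∧ j ≤ b ∧ u = t + a + j) ∨
      (∃ j, 1 ≤ j ∧ j ≤ p.len - t' ∧ u = t + a + b + j) := by
    intro u hu
    rcases Nat.lt_or_ge u (t+1) with h1 | h1
    · exact Or.inl (by omega)
    rcases Nat.lt_or_ge u (t+a+1) with h2 | h2
    · exact Or.inr (Or.inl ⟨u - t, by omega, by omega, by omega⟩)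
    rcases Nat.lt_or_ge u (t+a+b+1) with h3 | h3
    · exact Or.inr (Or.inr (Or.inl ⟨u - t - a, by omega, by omega, by omega⟩))
    · exact Or.inr (Or.inr (Or.inr ⟨u - t - a - b, by omega, by omega, by omega⟩))
  -- pairwise distinctness facts
  have FAB : ∀ u, u ≤ t → ∀ i, 1 ≤ i → i ≤ a → p.v u ≠ m.v i :=
    fun u hu i hi1 hi2 he => D1 i hi1 (by omega) u (by omega) he.symm
  have FAC : ∀ u, u ≤ t → ∀ j, 1 ≤ j → j ≤ b → p.v u ≠ m'.v (b - j) := by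
    intro u hu j hj1 hj2 he
    rcases Nat.lt_or_ge 0 (b - j) with hbj | hbj
    · exact D2 (b - j) (by omega) (by omega) u (by omega) he.symm
    · rw [show b - j = 0 by omega, hm'0] at he
      have := p.inj u t' (by omega) (by omega) he
      omega
  have FBC : ∀ i, 1 ≤ i → i ≤ a → ∀ j, 1 ≤ j → j ≤ b → m.v i ≠ m'.v (b - j) := by
    intro i hi1 hi2 j hj1 hj2 he
    rcases Nat.lt_or_ge i a with hlt | hge
    · exact hminrow i hi1 hlt (b - j) (by omega) he
    · rw [show i = a by omega, hav] at he
      have := m'.inj b (b - j) (by omega) (by omega) he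
      omega
  have FBD : ∀ i, 1 ≤ i → i ≤ a → ∀ u, u ≤ p.len → m.v i ≠ p.v u :=
    fun i hi1 hi2 u hu he => D1 i hi1 (by omega) u hu he
  have FCD : ∀ j, 1 ≤ j → j ≤ b → ∀ j', 1 ≤ j' → t' + j' ≤ p.len →
      m'.v (b - j) ≠ p.v (t' + j') := by
    intro j hj1 hj2 j' hj'1 hj'2 he
    rcases Nat.lt_or_ge 0 (b - j) with hbj | hbj
    · exact D2 (b - j) (by omega) (by omega) (t' + j') (by omega) he
    · rw [show b - j = 0 by omega, hm'0] at he
      have := p.inj t' (t' + j') (by omega) (by omega) he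
      omega
  have hinj : ∀ u1, u1 ≤ t + a + b + (p.len - t') → ∀ u2, u2 ≤ t + a + b + (p.len - t') →
      v' u1 = v' u2 → u1 = u2 := by
    intro u1 hu1 u2 hu2 he
    rcases classify u1 hu1 with hA1 | ⟨i1, hi11, hi12, rfl⟩ | ⟨j1, hj11, hj12, rfl⟩ |
        ⟨j1, hj11, hj12, rfl⟩ <;>
      rcases classify u2 hu2 with hA2 | ⟨i2, hi21, hi22, rfl⟩ | ⟨j2, hj21, hj22, rfl⟩ |
        ⟨j2, hj21, hj22, rfl⟩
    · rw [hv1 u1 hA1, hv1 u2 hA2] at he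
      exact p.inj u1 u2 (by omega) (by omega) he
    · rw [hv1 u1 hA1, hv2 i2 hi22] at he
      exact absurd he (FAB u1 hA1 i2 hi21 hi22)
    · rw [hv1 u1 hA1, hv3 j2 hj22] at he
      exact absurd he (FAC u1 hA1 j2 hj21 hj22)
    · rw [hv1 u1 hA1, hv4 j2] at he
      have := p.inj u1 (t' + j2) (by omega) (by omega) he
      omega
    · rw [hv2 i1 hi12, hv1 u2 hA2] at he
      exact absurd he.symm (FAB u2 hA2 i1 hi11 hi12)
    · rw [hv2 i1 hi12, hv2 i2 hi22] at he
      have := m.inj i1 i2 (by omega) (by omega) he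
      omega
    · rw [hv2 i1 hi12, hv3 j2 hj22] at he
      exact absurd he (FBC i1 hi11 hi12 j2 hj21 hj22)
    · rw [hv2 i1 hi12, hv4 j2] at he
      exact absurd he (FBD i1 hi11 hi12 (t' + j2) (by omega))
    · rw [hv3 j1 hj12, hv1 u2 hA2] at he
      exact absurd he.symm (FAC u2 hA2 j1 hj11 hj12)
    · rw [hv3 j1 hj12, hv2 i2 hi22] at he
      exact absurd he.symm (FBC i2 hi21 hi22 j1 hj11 hj12)
    · rw [hv3 j1 hj12, hv3 j2 hj22] at he
      have := m'.inj (b - j1) (b - j2) (by omega) (by omega) he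
      omega
    · rw [hv3 j1 hj12, hv4 j2] at he
      exact absurd he (FCD j1 hj11 hj12 j2 hj21 (by omega))
    · rw [hv4 j1, hv1 u2 hA2] at he
      have := p.inj (t' + j1) u2 (by omega) (by omega) he
      omega
    · rw [hv4 j1, hv2 i2 hi22] at he
      exact absurd he.symm (FBD i2 hi21 hi22 (t' + j1) (by omega))
    · rw [hv4 j1, hv3 j2 hj22] at he
      exact absurd he.symm (FCD j2 hj21 hj22 j1 hj11 (by omega))
    · rw [hv4 j1, hv4 j2] at he
      have := p.inj (t' + j1) (t' + j2) (by omega) (by omega) he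
      omega
  have hadj : ∀ u, u < t + a + b + (p.len - t') →
      (v' u, v' (u+1)) ∈ G.E ∨ (v' (u+1), v' u) ∈ G.E := by
    intro u hu
    rcases Nat.lt_or_ge u t with h1 | h1
    · rw [hv1 u (by omega), hv1 (u+1) (by omega)]
      exact p.adj u (by omega)
    rcases Nat.lt_or_ge u (t + a) with h2 | h2
    · obtain ⟨i, rfl⟩ : ∃ i, u = t + i := ⟨u - t, by omega⟩
      rw [show t + i + 1 = t + (i+1) by omega, hv2 (i+1) (by omega), hv2 i (by omega)]
      exact Or.inl (m.adj i (by omega))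
    rcases Nat.lt_or_ge u (t + a + b) with h3 | h3
    · obtain ⟨j, rfl⟩ : ∃ j, u = t + a + j := ⟨u - t - a, by omega⟩
      rw [show t + a + j + 1 = t + a + (j+1) by omega, hv3 (j+1) (by omega),
        hv3 j (by omega)]
      refine Or.inr ?_
      have := m'.adj (b - j - 1) (by omega)
      rw [show b - j - 1 + 1 = b - j by omega] at this
      rw [show b - (j+1) = b - j - 1 by omega]
      exact this
    · obtain ⟨j, rfl⟩ : ∃ j, u = t + a + b + j := ⟨u - t - a - b, by omega⟩
      rw [show t + a + b + j + 1 = t + a + b + (j+1) by omega, hv4 (j+1), hv4 j]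
      have := p.adj (t' + j) (by omega)
      rw [show t' + j + 1 = t' + (j + 1) by omega] at this
      exact this
  set p' : GPath G x y := ⟨t + a + b + (p.len - t'), v',
    by rw [hv1 0 (by omega)]; exact p.start_eq,
    by rw [hvend _ le_rfl]; exact p.end_eq,
    fun s u hs hu he => hinj s hs u hu he,
    hadj,
    fun u hu => by rw [hvend u hu, hvend _ le_rfl]⟩ with hp'
  have hp'len : p'.len = t + a + b + (p.len - t') := rfl
  have hp'v : p'.v = v' := rfl
  -- collider analysis
  have hCA : ∀ u, 0 < u → u < t → (p'.IsCollider u ↔ p.IsCollider u) := by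
    intro u h0 hu
    unfold GPath.IsCollider
    rw [hp'len, hp'v, hv1 u (by omega), hv1 (u-1) (by omega), hv1 (u+1) (by omega)]
    constructor
    · rintro ⟨-, -, hA, hB⟩; exact ⟨h0, by omega, hA, hB⟩
    · rintro ⟨-, -, hA, hB⟩; exact ⟨h0, by omega, hA, hB⟩
  have hCB : ∀ i, i < a → ¬ p'.IsCollider (t + i) := by
    intro i hi hcol
    have hB := hcol.2.2.2
    rw [hp'v, show t + i + 1 = t + (i + 1) by omega, hv2 (i+1) (by omega),
      hv2 i (by omega)] at hB
    exact edge_asymm (m.adj i (by omega)) hB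
  have hCjunc : p'.IsCollider (t + a) := by
    refine ⟨by omega, by rw [hp'len]; omega, ?_, ?_⟩
    · rw [hp'v, show t + a - 1 = t + (a - 1) by omega, hv2 (a-1) (by omega),
        hv2 a le_rfl]
      have := m.adj (a-1) (by omega)
      rw [show a - 1 + 1 = a by omega] at this
      exact this
    · rw [hp'v, show t + a + 1 = t + a + 1 from rfl]
      have e1 : v' (t + a + 1) = m'.v (b - 1) := hv3 1 (by omega)
      have e2 : v' (t + a) = m.v a := hv2 a le_rfl
      rw [e1, e2, hav]
      have := m'.adj (b-1) (by omega)
      rw [show b - 1 + 1 = b by omega] at this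
      exact this
  have hCC : ∀ j, 1 ≤ j → j < b → ¬ p'.IsCollider (t + a + j) := by
    intro j hj1 hj2 hcol
    have hA := hcol.2.2.1
    rw [hp'v, show t + a + j - 1 = t + a + (j - 1) by omega, hv3 (j-1) (by omega),
      hv3 j (by omega)] at hA
    have := m'.adj (b - j) (by omega)
    rw [show b - j + 1 = b - (j - 1) by omega] at this
    exact edge_asymm this hA
  have hCD0 : ¬ p'.IsCollider (t + a + b) := by
    intro hcol
    have hA := hcol.2.2.1
    rw [hp'v, show t + a + b - 1 = t + a + (b - 1) by omega, hv3 (b-1) (by omega),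
      hv3 b le_rfl] at hA
    have := m'.adj 0 (by omega)
    rw [show b - (b - 1) = 1 by omega, show b - b = 0 by omega] at hA
    exact edge_asymm this hA
  have hCE : ∀ j, 1 ≤ j → (p'.IsCollider (t + a + b + j) ↔ p.IsCollider (t' + j)) := by
    intro j hj
    unfold GPath.IsCollider
    rw [hp'len, hp'v]
    rw [show t + a + b + j - 1 = t + a + b + (j - 1) by omega,
      show t + a + b + j + 1 = t + a + b + (j + 1) by omega,
      hv4 (j-1), hv4 (j+1), hv4 j,
      show t' + (j - 1) = t' + j - 1 by omega,
      show t' + (j + 1) = t' + j + 1 by omega]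
    constructor
    · rintro ⟨-, hlt, hA, hB⟩
      exact ⟨by omega, by omega, hA, hB⟩
    · rintro ⟨-, hlt, hA, hB⟩
      exact ⟨by omega, by omega, hA, hB⟩
  -- non-collider condition for p'
  have hnonc : ∀ u, 0 < u → u < p'.len → ¬ p'.IsCollider u → p'.v u ∉ K := by
    intro u h0 hu hnc
    rw [hp'len] at hu
    rw [hp'v]
    rcases classify u (by omega) with hA1 | ⟨i, hi1, hi2, rfl⟩ | ⟨j, hj1, hj2, rfl⟩ |
      ⟨j, hj1, hj2, rfl⟩
    · rcases Nat.lt_or_ge u t with hlt | hge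
      · rw [hv1 u (by omega)]
        exact noncP u h0 (by omega) (fun hc => hnc ((hCA u h0 hlt).mpr hc))
      · rw [show u = t by omega, hv1 t le_rfl, ← hm0]
        exact hmnotK 0 (by omega)
    · rcases Nat.lt_or_ge i a with hlt | hge
      · rw [hv2 i (by omega)]
        exact hmnotK i (by omega)
      · rw [show t + i = t + a by omega] at hnc
        exact absurd hCjunc hnc
    · rcases Nat.lt_or_ge j b with hlt | hge
      · rw [hv3 j (by omega)]
        exact hm'notK (b - j) (by omega)
      · rw [show t + a + j = t + a + b by omega, hv3 b le_rfl,
          show b - b = 0 by omega]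
        exact hm'notK 0 (by omega)
    · rw [hv4 j]
      exact noncP (t' + j) (by omega) (by omega) (fun hc => hnc ((hCE j hj1).mpr hc))
  -- the bound function
  set B : ℕ → ℕ := fun u => if u < t then qmf u else if u < t + a then 0
    else if u = t + a then m.len - a else if u ≤ t + a + b then 0
    else qmf (u - (t + a + b) + t') with hBdef
  have hB1 : ∀ u, u < t → B u = qmf u := by
    intro u hu; rw [hBdef]; beta_reduce; rw [if_pos hu]
  have hB2 : ∀ u, t ≤ u → u < t + a → B u = 0 := by
    intro u hu1 hu2; rw [hBdef]; beta_reduce; rw [if_neg (by omega), if_pos (by omega)]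
  have hB3 : B (t + a) = m.len - a := by
    rw [hBdef]; beta_reduce; rw [if_neg (by omega), if_neg (by omega), if_pos rfl]
  have hB4 : ∀ u, t + a < u → u ≤ t + a + b → B u = 0 := by
    intro u hu1 hu2; rw [hBdef]; beta_reduce
    rw [if_neg (by omega), if_neg (by omega), if_neg (by omega), if_pos (by omega)]
  have hB5 : ∀ u, t + a + b < u → B u = qmf (u - (t + a + b) + t') := by
    intro u hu; rw [hBdef]; beta_reduce
    rw [if_neg (by omega), if_neg (by omega), if_neg (by omega), if_neg (by omega)]
  -- per-collider data for p'
  have hq : ∀ u, p'.IsCollider u → ∃ k ∈ K, ∃ mm : DiPath G (p'.v u) k,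
      (∀ i < mm.len, mm.v i ∉ K) ∧ mm.len ≤ B u := by
    intro u hcol
    have hu0 : 0 < u := hcol.1
    have huL : u < p'.len := hcol.2.1
    rw [hp'len] at huL
    rcases classify u (by omega) with hA1 | ⟨i, hi1, hi2, rfl⟩ | ⟨j, hj1, hj2, rfl⟩ |
      ⟨j, hj1, hj2, rfl⟩
    · have hlt : u < t := by
        rcases Nat.lt_or_ge u t with hlt | hge
        · exact hlt
        · exfalso
          rw [show u = t + 0 by omega] at hcol
          exact hCB 0 (by omega) hcol
      have hcolp : p.IsCollider u := (hCA u hu0 hlt).mp hcol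
      obtain ⟨k, hkK, mm, hmm1, hmm2⟩ := hqmf u hcolp
      refine ⟨k, hkK, mm.copy ?_ rfl, hmm1, ?_⟩
      · rw [hp'v, hv1 u (by omega)]
      · rw [hB1 u hlt]; exact hmm2
    · rcases Nat.lt_or_ge i a with hlt | hge
      · exact absurd hcol (hCB i hlt)
      · rw [show t + i = t + a by omega]
        refine ⟨kv, hkv, (m.dropFrom a ha2).copy ?_ rfl, ?_, ?_⟩
        · show m.v a = p'.v (t + a)
          rw [hp'v, hv2 a le_rfl]
        · intro i' hi'
          simp only [DiPath.copy_len] at hi'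
          show m.v (a + i') ∉ K
          refine hmnotK (a + i') ?_
          have : (m.dropFrom a ha2).len = m.len - a := rfl
          omega
        · rw [hB3]
          show m.len - a ≤ m.len - a
          exact le_rfl
    · rcases Nat.lt_or_ge j b with hlt | hge
      · exact absurd hcol (hCC j hj1 hlt)
      · rw [show t + a + j = t + a + b by omega] at hcol
        exact absurd hcol hCD0
    · have hcolp : p.IsCollider (t' + j) := (hCE j hj1).mp hcol
      obtain ⟨k, hkK, mm, hmm1, hmm2⟩ := hqmf (t' + j) hcolp
      refine ⟨k, hkK, mm.copy ?_ rfl, hmm1, ?_⟩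
      · rw [hp'v, hv4 j]
      · rw [hB5 _ (by omega), show t + a + b + j - (t + a + b) + t' = t' + j by omega]
        exact hmm2
  obtain ⟨c', hc'⟩ := cfg_mk' p' hnonc B hq
  rw [hp'len] at hc'
  refine ⟨c', lt_of_le_of_lt hc' ?_⟩
  -- sum computation
  have hS1 : ∑ u ∈ Finset.range t, B u = ∑ u ∈ Finset.range t, qmf u :=
    Finset.sum_congr rfl (fun u hu => hB1 u (Finset.mem_range.mp hu))
  have hsplit : ∑ u ∈ Finset.range (t + a + b + (p.len - t')), B u
      = ∑ u ∈ Finset.range t, B u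
        + ∑ i ∈ Finset.range (a + b + (p.len - t')), B (t + i) := by
    rw [show t + a + b + (p.len - t') = t + (a + b + (p.len - t')) by omega,
      Finset.sum_range_add]
  have hS2 : ∑ i ∈ Finset.range (a + b + (p.len - t')), B (t + i)
      ≤ (m.len - a) + ∑ w ∈ Finset.range (p.len - t' - 1), qmf (t' + 1 + w) := by
    rw [show a + b + (p.len - t') = a + 1 + (b + (p.len - t' - 1)) by omega,
      Finset.sum_range_add, Finset.sum_range_add]
    have hz : ∑ i ∈ Finset.range a, B (t + i) = 0 := by
      rw [Finset.sum_congr rfl (fun i hi => hB2 (t + i) (by omega)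
        (by have := Finset.mem_range.mp hi; omega))]
      simp
    have hone : ∑ i ∈ Finset.range 1, B (t + (a + i)) = m.len - a := by
      simp only [Finset.range_one, Finset.sum_singleton, Nat.add_zero]
      exact hB3
    rw [hz, hone]
    simp only [Nat.zero_add]
    apply Nat.add_le_add_left
    rw [show b + (p.len - t' - 1) = b + (p.len - t' - 1) from rfl, Finset.sum_range_add]
    have hz2 : ∑ r ∈ Finset.range b, B (t + (a + 1 + r)) = 0 := by
      rw [Finset.sum_congr rfl (fun r hr => hB4 (t + (a + 1 + r)) (by omega)
        (by have := Finset.mem_range.mp hr; omega))]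
      simp
    rw [hz2, Nat.zero_add]
    apply Finset.sum_le_sum
    intro w hw
    rw [hB5 (t + (a + 1 + (b + w))) (by omega)]
    apply le_of_eq
    congr 1
    omega
  have hold : ∑ u ∈ Finset.range t, qmf u + qmf t + qmf t'
        + ∑ w ∈ Finset.range (p.len - t' - 1), qmf (t' + 1 + w)
      ≤ ∑ u ∈ Finset.range p.len, qmf u := by
    have h2 : ∑ u ∈ Finset.range (t+1), qmf u
        = ∑ u ∈ Finset.range t, qmf u + qmf t := Finset.sum_range_succ _ _
    have h3 : ∑ u ∈ Finset.range (t'+1), qmf u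
        = ∑ u ∈ Finset.range t', qmf u + qmf t' := Finset.sum_range_succ _ _
    have h1 : ∑ u ∈ Finset.range (t+1), qmf u ≤ ∑ u ∈ Finset.range t', qmf u :=
      Finset.sum_le_sum_of_subset (Finset.range_subset_range.mpr (by omega))
    have e : p.len = (t' + 1) + (p.len - t' - 1) := by omega
    conv_rhs => rw [e]
    rw [Finset.sum_range_add]
    omega
  omega

lemma cfg_qmf (c : Cfg G x y K) : ∀ u, c.p.IsCollider u → ∃ k ∈ K,
    ∃ mm : DiPath G (c.p.v u) k, (∀ i < mm.len, mm.v i ∉ K) ∧ mm.len ≤ qm c u :=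
  fun u h => ⟨c.k u, c.kK u h, c.q u h, c.q_notK u h, (qm_eq c h).ge⟩

/-- In a measure-minimal configuration, each collider path meets `p` only at its root. -/
lemma minimal_iii (c : Cfg G x y K) (hmin : ∀ c' : Cfg G x y K, msr c ≤ msr c')
    (t : ℕ) (h : c.p.IsCollider t) (z : Fin n) (hz1 : (c.q t h).onPath z)
    (hz2 : c.p.onPath z) : z = c.p.v t := by
  by_contra hne
  obtain ⟨a₀, ha₀, hza⟩ := hz1
  obtain ⟨s₀, hs₀, hzs⟩ := hz2
  have ha₀1 : 1 ≤ a₀ := by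
    rcases Nat.eq_zero_or_pos a₀ with h0 | h0
    · exfalso; apply hne
      rw [← hza, h0, (c.q t h).start_eq]
    · exact h0
  have : DecidablePred (fun i => 1 ≤ i ∧ i ≤ (c.q t h).len ∧
      ∃ u ≤ c.p.len, (c.q t h).v i = c.p.v u) := fun _ => Classical.propDecidable _
  have hP : ∃ i, 1 ≤ i ∧ i ≤ (c.q t h).len ∧
      ∃ u ≤ c.p.len, (c.q t h).v i = c.p.v u :=
    ⟨a₀, ha₀1, ha₀, s₀, hs₀, by rw [hza, hzs]⟩
  obtain ⟨ha1, ha2, s, hs, hav⟩ := Nat.find_spec hP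
  have hminA : ∀ i, 1 ≤ i → i < Nat.find hP → ∀ u ≤ c.p.len, (c.q t h).v i ≠ c.p.v u := by
    intro i hi1 hi2 u hu he
    exact Nat.find_min hP hi2 ⟨hi1, by omega, u, hu, he⟩
  set a := Nat.find hP with hadef
  have hst : s ≠ t := by
    intro he
    have h0 : (c.q t h).v a = (c.q t h).v 0 := by
      rw [(c.q t h).start_eq, hav, he]
    have := (c.q t h).inj a 0 ha2 (by omega) h0
    omega
  rcases Nat.lt_or_ge t s with hts | hts
  · obtain ⟨c', hc'⟩ := surgeryA_half c.p t s a h c.nonc (qm c) (cfg_qmf c)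
      (c.k t) (c.kK t h) (c.q t h) (c.q_notK t h) (qm_eq c h).ge
      hs hts ha1 ha2 hav hminA
    exact absurd (hmin c') (by unfold msr at hc' ⊢; omega)
  · have hst' : s < t := by omega
    -- use the reversed configuration
    set L := c.p.len with hLdef
    have htL : t < L := h.2.1
    have ht0 : 0 < t := h.1
    set crev := c.rev with hcrev
    have hrevp : crev.p = c.p.rev := rfl
    have hrevlen : crev.p.len = L := rfl
    have hrev : crev.p.IsCollider (L - t) := by
      rw [hrevp]
      refine (c.p.rev_isCollider (by omega) (by omega)).mpr ?_
      rw [show c.p.len - (L - t) = t by omega]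
      exact h
    have hvrev : ∀ u, crev.p.v u = c.p.v (L - u) := fun u => rfl
    have hmq : (c.q t h).len ≤ qm crev (L - t) := by
      rw [hcrev, qm_rev c (L - t) (by omega), show c.p.len - (L - t) = t by omega,
        qm_eq c h]
    obtain ⟨c', hc'⟩ := surgeryA_half crev.p (L - t) (L - s) a hrev crev.nonc
      (qm crev) (cfg_qmf crev) (c.k t) (c.kK t h)
      ((c.q t h).copy (by rw [hvrev, show L - (L - t) = t by omega]) rfl)
      (by
        intro i hi
        simp only [DiPath.copy_len] at hi
        exact c.q_notK t h i hi)
      hmq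
      (by rw [hrevlen]; omega) (by omega) ha1 ha2
      (by
        show (c.q t h).v a = crev.p.v (L - s)
        rw [hvrev, show L - (L - s) = s by omega]
        exact hav)
      (by
        intro i hi1 hi2 u hu he
        rw [hrevlen] at hu
        simp only [DiPath.copy_v] at he
        rw [hvrev u] at he
        exact hminA i hi1 hi2 (L - u) (by omega) he)
    have hmm : msr c' < msr crev := hc' 
    rw [msr_rev c] at hmm
    have := hmin c'.rev
    rw [msr_rev c'] at this
    omega

/-- In a measure-minimal configuration satisfying (iii), distinct collider paths
are vertex-disjoint. -/
lemma minimal_iv (c : Cfg G x y K) (hmin : ∀ c' : Cfg G x y K, msr c ≤ msr c')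
    (hiii : ∀ t (h : c.p.IsCollider t) z, (c.q t h).onPath z → c.p.onPath z →
      z = c.p.v t)
    (t t' : ℕ) (h : c.p.IsCollider t) (h' : c.p.IsCollider t') (htt : t < t')
    (z : Fin n) (hz1 : (c.q t h).onPath z) (hz2 : (c.q t' h').onPath z) : False := by
  obtain ⟨a₀, ha₀, hza⟩ := hz1
  obtain ⟨b₀, hb₀, hzb⟩ := hz2
  have hptt' : c.p.v t ≠ c.p.v t' := by
    intro he
    have := c.p.inj t t' (by have := h.2.1; omega) (by have := h'.2.1; omega) he
    omega
  have ha₀1 : 1 ≤ a₀ := by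
    rcases Nat.eq_zero_or_pos a₀ with h0 | h0
    · exfalso
      rw [h0, (c.q t h).start_eq] at hza
      have := hiii t' h' (c.p.v t) (by rw [hza]; exact ⟨b₀, hb₀, hzb⟩)
        ⟨t, by have := h.2.1; omega, rfl⟩
      exact hptt' this
    · exact h0
  have : DecidablePred (fun i => 1 ≤ i ∧ i ≤ (c.q t h).len ∧
      ∃ j ≤ (c.q t' h').len, (c.q t h).v i = (c.q t' h').v j) :=
    fun _ => Classical.propDecidable _
  have hP : ∃ i, 1 ≤ i ∧ i ≤ (c.q t h).len ∧
      ∃ j ≤ (c.q t' h').len, (c.q t h).v i = (c.q t' h').v j :=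
    ⟨a₀, ha₀1, ha₀, b₀, hb₀, by rw [hza, hzb]⟩
  obtain ⟨ha1, ha2, b, hb, hav⟩ := Nat.find_spec hP
  have hminrow : ∀ i, 1 ≤ i → i < Nat.find hP → ∀ j ≤ (c.q t' h').len,
      (c.q t h).v i ≠ (c.q t' h').v j := by
    intro i hi1 hi2 j hj he
    exact Nat.find_min hP hi2 ⟨hi1, by omega, j, hj, he⟩
  set a := Nat.find hP with hadef
  have D1 : ∀ i, 1 ≤ i → i ≤ (c.q t h).len → ∀ u ≤ c.p.len,
      (c.q t h).v i ≠ c.p.v u := by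
    intro i hi1 hi2 u hu he
    have h1 := hiii t h ((c.q t h).v i) ⟨i, hi2, rfl⟩ ⟨u, hu, he.symm⟩
    have h0 : (c.q t h).v i = (c.q t h).v 0 := by
      rw [(c.q t h).start_eq, h1]
    have := (c.q t h).inj i 0 hi2 (by omega) h0
    omega
  have D2 : ∀ j, 1 ≤ j → j ≤ (c.q t' h').len → ∀ u ≤ c.p.len,
      (c.q t' h').v j ≠ c.p.v u := by
    intro j hj1 hj2 u hu he
    have h1 := hiii t' h' ((c.q t' h').v j) ⟨j, hj2, rfl⟩ ⟨u, hu, he.symm⟩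
    have h0 : (c.q t' h').v j = (c.q t' h').v 0 := by
      rw [(c.q t' h').start_eq, h1]
    have := (c.q t' h').inj j 0 hj2 (by omega) h0
    omega
  have hb1 : 1 ≤ b := by
    rcases Nat.eq_zero_or_pos b with h0 | h0
    · exfalso
      rw [h0, (c.q t' h').start_eq] at hav
      exact D1 a ha1 ha2 t' (by have := h'.2.1; omega) hav
    · exact h0
  obtain ⟨c', hc'⟩ := surgeryB c.p t t' a b h h' htt c.nonc (qm c) (cfg_qmf c)
    (c.k t) (c.k t') (c.kK t h) (c.kK t' h') (c.q t h) (c.q t' h')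
    (c.q_notK t h) (c.q_notK t' h') (qm_eq c h).ge (qm_eq c h').ge
    ha1 ha2 hb1 hb hav hminrow D1 D2
  exact absurd (hmin c') (by unfold msr at hc' ⊢; omega)

/-- Main combinatorial statement. -/
theorem statement10' (hnd : ¬ G.dSep x y K) :
    ∃ p : GPath G x y,
      (∀ t : ℕ, 0 < t → t < p.len → ¬ p.IsCollider t → p.v t ∉ K) ∧
      ∃ (k : ℕ → Fin n) (q : ∀ t : ℕ, p.IsCollider t → DiPath G (p.v t) (k t)),
        ∀ (t : ℕ) (h : p.IsCollider t),
          k t ∈ K ∧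
          (∀ z : Fin n, (q t h).onPath z → p.onPath z → z = p.v t) ∧
          ∀ (t' : ℕ) (h' : p.IsCollider t'), t ≠ t' →
            ∀ z : Fin n, (q t h).onPath z → ¬ (q t' h').onPath z := by
  obtain ⟨c0⟩ := cfg_exists hnd
  have hQ : ∃ N, ∃ c : Cfg G x y K, msr c = N := ⟨msr c0, c0, rfl⟩
  have : DecidablePred (fun N => ∃ c : Cfg G x y K, msr c = N) :=
    fun _ => Classical.propDecidable _
  obtain ⟨c, hc⟩ := Nat.find_spec hQ
  have hmin : ∀ c' : Cfg G x y K, msr c ≤ msr c' := by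
    intro c'
    rw [hc]
    by_contra hlt
    exact Nat.find_min hQ (by omega) ⟨c', rfl⟩
  have hiii := minimal_iii c hmin
  refine ⟨c.p, c.nonc, c.k, c.q, fun t h => ⟨c.kK t h, hiii t h, ?_⟩⟩
  intro t' h' hne z hz hz'
  rcases Nat.lt_or_ge t t' with hlt | hge
  · exact minimal_iv c hmin hiii t t' h h' hlt z hz hz'
  · exact minimal_iv c hmin hiii t' t h' h (by omega) z hz' hz

end
end Statement10Aux

open CI in
/-- existence of a d-connecting path with a well-behaved system of
directed paths from its colliders into `K`. -/
theorem statement10 {n : ℕ} (G : DAG n) (x y : Fin n) (hxy : x ≠ y)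
    (K : Finset (Fin n)) (hxK : x ∉ K) (hyK : y ∉ K) (hnd : ¬ G.dSep x y K) :
    ∃ p : GPath G x y,
      (∀ t : ℕ, 0 < t → t < p.len → ¬ p.IsCollider t → p.v t ∉ K) ∧
      ∃ (k : ℕ → Fin n) (q : ∀ t : ℕ, p.IsCollider t → DiPath G (p.v t) (k t)),
        ∀ (t : ℕ) (h : p.IsCollider t),
          k t ∈ K ∧
          (∀ z : Fin n, (q t h).onPath z → p.onPath z → z = p.v t) ∧
          ∀ (t' : ℕ) (h' : p.IsCollider t'), t ≠ t' →
            ∀ z : Fin n, (q t h).onPath z → ¬ (q t' h').onPath z := by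
  exact statement10' hnd
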